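/- arXiv:1009.4862 — 3 statements merged into one kernel-verified Lean document; each statement's English description precedes it below -/
import Mathlib

section
/- Let $n\ge 1$ and let $\eta_0,\dots,\eta_n$ be real numbers whose maximum is attained at a unique index $k$ (i.e. $\eta_k>\eta_i$ for all $i\ne k$). Then for all $t>0$, $\int_{[0,\infty)^n} \exp\{\sum_{i=0}^{n-1} t_i\eta_i + (t-\sum_{i=0}^{n-1}t_i)\eta_n\}\,\mathbf{1}\{\sum_{i=0}^{n-1}t_i<t\}\, dt_0\cdots dt_{n-1} \le e^{t\eta_k}\prod_{i\ne k}\frac{1}{\eta_k-\eta_i}$. -/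
/-!
Write `t_n := T - ∑ t_i` for the remaining time. Since `∑_{i ≤ n} t_i = T`, the exponent is
`∑_{i ≤ n} t_i η_i = T η_k - ∑_{i ≠ k} t_i (η_k - η_i)`. Trading the coordinate `t_k` for `t_n`
is an affine involution of `ℝⁿ`, hence volume preserving, and it maps the simplex into the
positive orthant. There the integrand factors into one-dimensional exponentials with rates
`η_k - η_i > 0`, whose integrals are `(η_k - η_i)⁻¹`.
-/

open MeasureTheory Real Set Function

theorem integrableOn_exp_neg_mul_Ici {a : ℝ} (ha : 0 < a) :
    IntegrableOn (fun s : ℝ => exp (-(a * s))) (Ici 0) := by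
  simpa only [neg_mul] using
    (integrableOn_Ici_iff_integrableOn_Ioi).2 (integrableOn_exp_mul_Ioi (neg_neg_of_pos ha) 0)

theorem integral_exp_neg_mul_Ici {a : ℝ} (ha : 0 < a) :
    ∫ s in Ici (0 : ℝ), exp (-(a * s)) = a⁻¹ := by
  rw [integral_Ici_eq_integral_Ioi]
  simpa only [neg_mul, mul_zero, exp_zero, neg_div, neg_neg, one_div, inv_neg] using
    integral_exp_mul_Ioi (neg_neg_of_pos ha) 0

theorem exp_neg_sum_mul {ι : Type*} [Fintype ι] (a y : ι → ℝ) :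
    exp (-∑ i, a i * y i) = ∏ i, exp (-(a i * y i)) := by
  rw [← Finset.sum_neg_distrib, exp_sum]

theorem integrableOn_exp_neg_sum_mul_pi_Ici {ι : Type*} [Fintype ι] {a : ι → ℝ}
    (ha : ∀ i, 0 < a i) :
    IntegrableOn (fun y : ι → ℝ => exp (-∑ i, a i * y i)) (univ.pi fun _ => Ici 0) := by
  simp_rw [IntegrableOn, volume_pi, Measure.restrict_pi_pi, exp_neg_sum_mul]
  exact Integrable.fintype_prod fun i => integrableOn_exp_neg_mul_Ici (ha i)

theorem integral_exp_neg_sum_mul_pi_Ici {ι : Type*} [Fintype ι] {a : ι → ℝ}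
    (ha : ∀ i, 0 < a i) :
    ∫ y in univ.pi (fun _ => Ici (0 : ℝ)), exp (-∑ i, a i * y i) = ∏ i, (a i)⁻¹ := by
  simp_rw [volume_pi, Measure.restrict_pi_pi, exp_neg_sum_mul,
    integral_fintype_prod_eq_prod (fun i s => exp (-(a i * s))), integral_exp_neg_mul_Ici (ha _)]

theorem MeasureTheory.MeasurePreserving.setIntegral_comp_le_of_mapsTo {α β : Type*}
    [MeasurableSpace α] [MeasurableSpace β] {μ : Measure α} {ν : Measure β} {Ψ : α → β}
    (hΨ : MeasurePreserving Ψ μ ν) {S : Set α} {U : Set β} (hU : MeasurableSet U)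
    (hSU : MapsTo Ψ S U) {g : β → ℝ} (hg0 : ∀ y ∈ U, 0 ≤ g y) (hg : IntegrableOn g U ν) :
    ∫ x in S, g (Ψ x) ∂μ ≤ ∫ y in U, g y ∂ν := by
  have hΨU := hΨ.restrict_preimage hU
  calc ∫ x in S, g (Ψ x) ∂μ ≤ ∫ x in Ψ ⁻¹' U, g (Ψ x) ∂μ :=
        setIntegral_mono_set (hΨU.integrable_comp_of_integrable hg)
          (ae_restrict_of_forall_mem (hΨ.measurable hU) fun x hx => hg0 _ hx)
          (Filter.Eventually.of_forall hSU)
    _ = ∫ y in U, g y ∂ν := by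
        rw [← integral_map hΨU.measurable.aemeasurable (hΨU.map_eq ▸ hg.aestronglyMeasurable),
          hΨU.map_eq]

theorem LinearMap.measurePreserving_of_involutive {E : Type*} [NormedAddCommGroup E]
    [NormedSpace ℝ E] [MeasurableSpace E] [BorelSpace E] [FiniteDimensional ℝ E]
    (μ : Measure E) [μ.IsAddHaarMeasure] (f : E →ₗ[ℝ] E) (hf : Involutive f) :
    MeasurePreserving f μ μ := by
  have hdet : LinearMap.det f * LinearMap.det f = 1 := by
    rw [← LinearMap.det_comp, show f ∘ₗ f = LinearMap.id from LinearMap.ext hf, LinearMap.det_id]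
  refine ⟨f.continuous_of_finiteDimensional.measurable, ?_⟩
  rw [Measure.map_linearMap_addHaar_eq_smul_addHaar μ (left_ne_zero_of_mul_eq_one hdet)]
  rcases mul_self_eq_one_iff.1 hdet with h | h <;> simp [h]

theorem measurePreserving_update_sub_sum {ι : Type*} [Fintype ι] [DecidableEq ι] (j : ι)
    (c : ℝ) : MeasurePreserving (fun x : ι → ℝ => update x j (c - ∑ i, x i)) := by
  let L : (ι → ℝ) →ₗ[ℝ] (ι → ℝ) :=
    { toFun := fun x => update x j (-∑ i, x i)
      map_add' := fun x y => by
        ext i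
        rcases eq_or_ne i j with rfl | hi
        · simp [Finset.sum_add_distrib, add_comm]
        · simp [hi]
      map_smul' := fun r x => by
        ext i
        rcases eq_or_ne i j with rfl | hi
        · simp [Finset.mul_sum]
        · simp [hi] }
  have hL : Involutive L := fun x => by
    ext i
    rcases eq_or_ne i j with rfl | hi
    · simp [L, Finset.sum_update_of_mem]
    · simp [L, hi]
  have hΨ : (fun x : ι → ℝ => update x j (c - ∑ i, x i)) = (· + Pi.single j c) ∘ L := by
    ext x i
    rcases eq_or_ne i j with rfl | hi
    · simp only [L, LinearMap.coe_mk, AddHom.coe_mk, comp_apply, Pi.add_apply, update_self,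
        Pi.single_eq_same]
      ring
    · simp [L, hi]
  rw [hΨ]
  exact (measurePreserving_add_right volume _).comp (L.measurePreserving_of_involutive volume hL)

namespace Fin

variable {n : ℕ}

/-- Enumerates the indices other than `k`: `i.castSucc`, with `last n` taking the slot of `k`. -/
def swapCastSucc (k : Fin (n + 1)) (i : Fin n) : Fin (n + 1) :=
  Equiv.swap k (last n) i.castSucc

theorem swapCastSucc_ne (k : Fin (n + 1)) (i : Fin n) : swapCastSucc k i ≠ k := by
  simp [swapCastSucc, Equiv.swap_apply_eq_iff, castSucc_ne_last]

@[to_additive]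
theorem prod_swapCastSucc {M : Type*} [CommMonoid M] (k : Fin (n + 1)) (f : Fin (n + 1) → M) :
    ∏ i, f (swapCastSucc k i) = ∏ i ∈ Finset.univ.erase k, f i := by
  refine Finset.prod_nbij (s := Finset.univ) (swapCastSucc k) (by simp [swapCastSucc_ne])
    (fun i _ j _ h => castSucc_injective _ ((Equiv.swap k (last n)).injective h))
    (fun j hj => ?_) (fun _ _ => rfl)
  obtain ⟨i, hi⟩ : ∃ i, castSucc i = Equiv.swap k (last n) j := by
    rw [exists_castSucc_eq]
    simpa [Equiv.swap_apply_eq_iff] using hj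
  exact ⟨i, Finset.mem_coe.2 (Finset.mem_univ i), by simp [swapCastSucc, hi]⟩

theorem sum_mul_eq_sub_sum_swapCastSucc (X η : Fin (n + 1) → ℝ) (k : Fin (n + 1)) :
    ∑ i, X i * η i
      = (∑ i, X i) * η k - ∑ i, (η k - η (swapCastSucc k i)) * X (swapCastSucc k i) := by
  rw [sum_swapCastSucc k fun i => (η k - η i) * X i, Finset.sum_erase _ (by simp),
    Finset.sum_mul, ← Finset.sum_sub_distrib]
  exact Finset.sum_congr rfl fun i _ => by ring

def snocRemainder (T : ℝ) (x : Fin n → ℝ) : Fin (n + 1) → ℝ :=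
  snoc x (T - ∑ i, x i)

theorem sum_snocRemainder (T : ℝ) (x : Fin n → ℝ) : ∑ i, snocRemainder T x i = T := by
  simp [snocRemainder, sum_univ_castSucc]

theorem sum_snocRemainder_mul (T : ℝ) (x : Fin n → ℝ) (η : Fin (n + 1) → ℝ) :
    ∑ i, snocRemainder T x i * η i = ∑ i, x i * η i.castSucc + (T - ∑ i, x i) * η (last n) := by
  simp [snocRemainder, sum_univ_castSucc]

theorem snocRemainder_nonneg {T : ℝ} {x : Fin n → ℝ} (hx : ∀ i, 0 ≤ x i) (hxT : ∑ i, x i ≤ T)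
    (i : Fin (n + 1)) : 0 ≤ snocRemainder T x i := by
  induction i using lastCases with
  | last => simpa [snocRemainder] using hxT
  | cast i => simpa [snocRemainder] using hx i

theorem measurePreserving_snocRemainder_swapCastSucc (k : Fin (n + 1)) (T : ℝ) :
    MeasurePreserving (fun x i => snocRemainder T x (swapCastSucc k i)) := by
  induction k using lastCases with
  | last =>
    have h : (fun x i => snocRemainder T x (swapCastSucc (last n) i)) = id := by
      ext x i
      simp [swapCastSucc, snocRemainder]
    rw [h]
    exact MeasurePreserving.id volume
  | cast j =>
    convert measurePreserving_update_sub_sum j T using 1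
    ext x i
    rcases eq_or_ne i j with rfl | hij
    · simp [swapCastSucc, snocRemainder]
    · simp [swapCastSucc, snocRemainder, hij, Equiv.swap_apply_of_ne_of_ne, castSucc_ne_last]

end Fin

theorem waiting_time_integral_bound_general (n : ℕ) (η : Fin (n + 1) → ℝ)
    (k : Fin (n + 1)) (hk : ∀ i, i ≠ k → η i < η k) (T : ℝ) :
    (∫ x in {x : Fin n → ℝ | (∀ i, 0 ≤ x i) ∧ ∑ i, x i < T},
        Real.exp ((∑ i, x i * η i.castSucc) + (T - ∑ i, x i) * η (Fin.last n)))
      ≤ Real.exp (T * η k) * ∏ i ∈ Finset.univ.erase k, (η k - η i)⁻¹ := by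
  set a : Fin n → ℝ := fun i => η k - η (k.swapCastSucc i)
  have ha : ∀ i, 0 < a i := fun i => sub_pos.2 (hk _ (k.swapCastSucc_ne i))
  have hexp : ∀ x : Fin n → ℝ,
      (∑ i, x i * η i.castSucc) + (T - ∑ i, x i) * η (Fin.last n)
        = T * η k + -∑ i, a i * Fin.snocRemainder T x (k.swapCastSucc i) := fun x => by
    rw [← Fin.sum_snocRemainder_mul, Fin.sum_mul_eq_sub_sum_swapCastSucc _ _ k,
      Fin.sum_snocRemainder]
    ring
  calc (∫ x in {x : Fin n → ℝ | (∀ i, 0 ≤ x i) ∧ ∑ i, x i < T},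
        exp ((∑ i, x i * η i.castSucc) + (T - ∑ i, x i) * η (Fin.last n)))
      = ∫ x in {x : Fin n → ℝ | (∀ i, 0 ≤ x i) ∧ ∑ i, x i < T},
          exp (T * η k) * exp (-∑ i, a i * Fin.snocRemainder T x (k.swapCastSucc i)) := by
        simp_rw [hexp, exp_add]
    _ ≤ ∫ y in univ.pi fun _ => Ici 0, exp (T * η k) * exp (-∑ i, a i * y i) :=
        (k.measurePreserving_snocRemainder_swapCastSucc T).setIntegral_comp_le_of_mapsTo
          (MeasurableSet.univ_pi fun _ => measurableSet_Ici)
          (fun x hx i _ => Fin.snocRemainder_nonneg hx.1 hx.2.le _)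
          (fun y _ => by positivity) ((integrableOn_exp_neg_sum_mul_pi_Ici ha).const_mul _)
    _ = exp (T * η k) * ∏ i ∈ Finset.univ.erase k, (η k - η i)⁻¹ := by
        rw [integral_const_mul, integral_exp_neg_sum_mul_pi_Ici ha,
          k.prod_swapCastSucc fun i => (η k - η i)⁻¹]

theorem waiting_time_integral_bound (n : ℕ) (hn : 1 ≤ n) (η : Fin (n + 1) → ℝ)
    (k : Fin (n + 1)) (hk : ∀ i, i ≠ k → η i < η k) (T : ℝ) (hT : 0 < T) :
    (∫ x in {x : Fin n → ℝ | (∀ i, 0 ≤ x i) ∧ ∑ i, x i < T},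
        Real.exp ((∑ i, x i * η i.castSucc) + (T - ∑ i, x i) * η (Fin.last n)))
      ≤ Real.exp (T * η k) * ∏ i ∈ Finset.univ.erase k, (η k - η i)⁻¹ :=
  waiting_time_integral_bound_general n η k hk T
end

section
/- Let $(\xi(z))_{z\in\mathbb{Z}^d}$ be i.i.d. standard exponential random variables, i.e. $P(\xi(z)>x)=e^{-x}$ for $x\ge 0$. For $r>0$ let $M_r=\max_{|z|\le r}\xi(z)$ (max over the $\ell^1$-ball of radius $r$). Then for every $c>0$, almost surely $M_r \ge d\log r - (1+c)\log\log\log r$ for all sufficiently large $r$. -/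
/-!
Fix the scale `r ≈ e^k` and the cube `{0, …, ⌊e^k / d⌋}^d`, which lies in the ℓ¹-ball of radius
`e^k` and has at least `(e^k / d)^d` points. With `a_k = d (k + 1) - (1 + c) log log k`, each point
exceeds `a_k` with probability `e^{-a_k}`, so by independence all of them stay below `a_k` with
probability at most `exp (-(e^k / d)^d e^{-a_k}) = exp (-(log k)^{1 + c} / (d e)^d) ≤ k⁻²` for large
`k`. Borel–Cantelli gives, almost surely, an exceedance at every large scale `k`, and taking
`k = ⌊log r⌋` transfers this to every large radius `r`.
-/

open MeasureTheory ProbabilityTheory Real Filter Finset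

theorem ProbabilityTheory.iIndepFun.measureReal_biInter_le_le_exp {Ω ι : Type*}
    [MeasurableSpace Ω] {P : Measure Ω} [IsProbabilityMeasure P] {ξ : ι → Ω → ℝ}
    (hmeas : ∀ i, Measurable (ξ i)) (hindep : iIndepFun ξ P) (S : Finset ι) {t q : ℝ} (hq : 0 ≤ q)
    (htail : ∀ i ∈ S, ENNReal.ofReal q ≤ P {ω | t < ξ i ω}) :
    P.real (⋂ i ∈ S, {ω | ξ i ω ≤ t}) ≤ exp (-(#S * q)) := by
  have hfactor : ∀ i ∈ S, P (ξ i ⁻¹' Set.Iic t) ≤ ENNReal.ofReal (exp (-q)) := by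
    intro i hi
    have hcompl : ξ i ⁻¹' Set.Iic t = {ω | t < ξ i ω}ᶜ := by ext; simp
    calc P (ξ i ⁻¹' Set.Iic t) = 1 - P {ω | t < ξ i ω} := by
          rw [hcompl]; exact prob_compl_eq_one_sub (hmeas i measurableSet_Ioi)
      _ ≤ 1 - ENNReal.ofReal q := tsub_le_tsub_left (htail i hi) 1
      _ = ENNReal.ofReal (1 - q) := by rw [ENNReal.ofReal_sub 1 hq, ENNReal.ofReal_one]
      _ ≤ ENNReal.ofReal (exp (-q)) :=
          ENNReal.ofReal_le_ofReal (by linarith [add_one_le_exp (-q)])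
  have hprod : P (⋂ i ∈ S, ξ i ⁻¹' Set.Iic t) ≤ ENNReal.ofReal (exp (-(#S * q))) := by
    rw [hindep.measure_inter_preimage_eq_mul S (fun _ _ => measurableSet_Iic), neg_mul_eq_mul_neg,
      exp_nat_mul, ENNReal.ofReal_pow (exp_pos _).le]
    exact Finset.prod_le_pow_card S _ _ hfactor
  exact ENNReal.toReal_le_of_le_ofReal (exp_pos _).le hprod

noncomputable def cube (d n : ℕ) : Finset (Fin d → ℤ) :=
  Fintype.piFinset fun _ => Finset.Icc 0 (n : ℤ)

theorem card_cube (d n : ℕ) : #(cube d n) = (n + 1) ^ d := by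
  simp [cube, Int.card_Icc]

theorem sum_abs_le_of_mem_cube {d n : ℕ} {z : Fin d → ℤ} (hz : z ∈ cube d n) :
    ∑ i, |(z i : ℝ)| ≤ d * n := by
  calc ∑ i, |(z i : ℝ)| ≤ ∑ _i : Fin d, (n : ℝ) := by
        refine Finset.sum_le_sum fun i _ => ?_
        obtain ⟨h0, hn⟩ := Finset.mem_Icc.1 (Fintype.mem_piFinset.1 hz i)
        rw [abs_of_nonneg (by exact_mod_cast h0)]
        exact_mod_cast hn
    _ = d * n := by simp

theorem sum_abs_le_of_mem_cube_floor {d : ℕ} {x : ℝ} (hx : 0 ≤ x) {z : Fin d → ℤ}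
    (hz : z ∈ cube d ⌊x / d⌋₊) : ∑ i, |(z i : ℝ)| ≤ x := by
  refine (sum_abs_le_of_mem_cube hz).trans ?_
  rcases Nat.eq_zero_or_pos d with rfl | hd
  · simpa using hx
  · calc (d : ℝ) * ⌊x / d⌋₊ ≤ d * (x / d) := by gcongr; exact Nat.floor_le (by positivity)
      _ = x := by field_simp

theorem div_pow_le_card_cube_floor {d : ℕ} {x : ℝ} (hx : 0 ≤ x) :
    (x / d) ^ d ≤ #(cube d ⌊x / d⌋₊) := by
  rw [card_cube]
  push_cast
  gcongr
  exact (Nat.lt_floor_add_one _).le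

noncomputable def threshold (d : ℕ) (c : ℝ) (k : ℕ) : ℝ :=
  d * (k + 1) - (1 + c) * log (log k)

theorem isLittleO_log_log_id_atTop : (fun x => log (log x)) =o[atTop] id :=
  (isLittleO_log_id_atTop.comp_tendsto tendsto_log_atTop).trans isLittleO_log_id_atTop

theorem eventually_threshold_nonneg {d : ℕ} (hd : 1 ≤ d) (c : ℝ) :
    ∀ᶠ k : ℕ in atTop, 0 ≤ threshold d c k := by
  have hbound := tendsto_natCast_atTop_atTop.eventually
    ((isLittleO_log_log_id_atTop.const_mul_left (1 + c)).bound one_pos)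
  filter_upwards [hbound] with k hk
  have hdR : (1 : ℝ) ≤ d := by exact_mod_cast hd
  simp only [norm_eq_abs, id, one_mul, Nat.abs_cast] at hk
  unfold threshold
  nlinarith [le_abs_self ((1 + c) * log (log (k : ℝ))), (Nat.cast_nonneg k : (0 : ℝ) ≤ k)]

theorem eventually_two_log_le {d : ℕ} (hd : 0 < d) {c : ℝ} (hc : 0 < c) :
    ∀ᶠ k : ℕ in atTop, 2 * log k ≤ (exp k / d) ^ d * exp (-threshold d c k) := by
  have hLL : Tendsto (fun k : ℕ => log (log k)) atTop atTop :=
    (tendsto_log_atTop.comp tendsto_log_atTop).comp tendsto_natCast_atTop_atTop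
  filter_upwards [hLL.eventually_ge_atTop ((log 2 + d * log d + d) / c), eventually_gt_atTop 1]
    with k hk hk1
  have hlogk : 0 < log k := log_pos (by exact_mod_cast hk1)
  have hc' : log 2 + d * log d + d ≤ c * log (log k) := by rwa [div_le_iff₀' hc] at hk
  calc 2 * log k = exp (log 2 + log (log k)) := by rw [exp_add, exp_log two_pos, exp_log hlogk]
    _ ≤ exp (d * (k - log d) - threshold d c k) := by
        gcongr
        unfold threshold
        linarith
    _ = (exp k / d) ^ d * exp (-threshold d c k) := by
        rw [sub_eq_add_neg _ (threshold d c k), exp_add, exp_nat_mul, exp_sub,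
          exp_log (by positivity)]

section Exceedance

variable {Ω : Type*} [MeasurableSpace Ω] {P : Measure Ω} [IsProbabilityMeasure P] {d : ℕ}
  {ξ : (Fin d → ℤ) → Ω → ℝ} {c : ℝ}

theorem eventually_measureReal_cube_le_threshold_le (hmeas : ∀ z, Measurable (ξ z))
    (hindep : iIndepFun ξ P)
    (hlaw : ∀ z, ∀ x : ℝ, 0 ≤ x → P {ω | x < ξ z ω} = ENNReal.ofReal (exp (-x)))
    (hd : 1 ≤ d) (hc : 0 < c) :
    ∀ᶠ k : ℕ in atTop,
      P.real (⋂ z ∈ cube d ⌊exp k / d⌋₊, {ω | ξ z ω ≤ threshold d c k}) ≤ ((k : ℝ) ^ 2)⁻¹ := by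
  filter_upwards [eventually_threshold_nonneg hd c, eventually_two_log_le hd hc,
    eventually_gt_atTop 0] with k hthr h2log hk
  have hcard := div_pow_le_card_cube_floor (d := d) (exp_pos (k : ℝ)).le
  calc _ ≤ exp (-(#(cube d ⌊exp k / d⌋₊) * exp (-threshold d c k))) :=
        hindep.measureReal_biInter_le_le_exp hmeas _ (exp_pos _).le
          fun z _ => (hlaw z _ hthr).ge
    _ ≤ exp (-(2 * log k)) := by
        rw [exp_le_exp, neg_le_neg_iff]
        exact h2log.trans (mul_le_mul_of_nonneg_right hcard (exp_pos _).le)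
    _ = ((k : ℝ) ^ 2)⁻¹ := by rw [exp_neg, two_mul, exp_add, exp_log (by positivity), sq]

theorem ae_eventually_exists_threshold_lt (hmeas : ∀ z, Measurable (ξ z))
    (hindep : iIndepFun ξ P)
    (hlaw : ∀ z, ∀ x : ℝ, 0 ≤ x → P {ω | x < ξ z ω} = ENNReal.ofReal (exp (-x)))
    (hd : 1 ≤ d) (hc : 0 < c) :
    ∀ᵐ ω ∂P, ∀ᶠ k : ℕ in atTop, ∃ z ∈ cube d ⌊exp k / d⌋₊, threshold d c k < ξ z ω := by
  set B : ℕ → Set Ω := fun k => ⋂ z ∈ cube d ⌊exp k / d⌋₊, {ω | ξ z ω ≤ threshold d c k}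
  have hsummable : Summable fun k => P.real (B k) :=
    (summable_nat_pow_inv.2 one_lt_two).of_norm_bounded_eventually_nat <| by
      filter_upwards [eventually_measureReal_cube_le_threshold_le hmeas hindep hlaw hd hc]
        with k hk
      rwa [norm_of_nonneg measureReal_nonneg]
  have htsum : ∑' k, P (B k) ≠ ⊤ := by
    simp_rw [← ofReal_measureReal (measure_ne_top P _)]
    rw [← ENNReal.ofReal_tsum_of_nonneg (fun _ => measureReal_nonneg) hsummable]
    exact ENNReal.ofReal_ne_top
  filter_upwards [ae_eventually_notMem htsum] with ω hω
  filter_upwards [hω] with k hk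
  simpa [B] using hk

end Exceedance

theorem eventually_exists_of_eventually_threshold_lt {d : ℕ} {c : ℝ} (hc : 0 ≤ 1 + c)
    {f : (Fin d → ℤ) → ℝ}
    (h : ∀ᶠ k : ℕ in atTop, ∃ z ∈ cube d ⌊exp k / d⌋₊, threshold d c k < f z) :
    ∀ᶠ r in atTop, ∃ z : Fin d → ℤ, ∑ i, |(z i : ℝ)| ≤ r ∧
      d * log r - (1 + c) * log (log (log r)) ≤ f z := by
  have hfloor : Tendsto (fun r => ⌊log r⌋₊) atTop atTop :=
    tendsto_nat_floor_atTop.comp tendsto_log_atTop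
  filter_upwards [hfloor.eventually (h.and (eventually_ge_atTop 2)), eventually_gt_atTop 0]
    with r ⟨⟨z, hz, hlt⟩, hk2⟩ hr
  set k := ⌊log r⌋₊
  have hlog_pos : 1 ≤ log r := Nat.floor_pos.1 (by omega)
  have hk_le : (k : ℝ) ≤ log r := Nat.floor_le (by linarith)
  refine ⟨z, ?_, ?_⟩
  · calc ∑ i, |(z i : ℝ)| ≤ exp k := sum_abs_le_of_mem_cube_floor (exp_pos _).le hz
      _ ≤ exp (log r) := exp_le_exp.2 hk_le
      _ = r := exp_log hr
  · have hk1 : 1 < (k : ℝ) := by exact_mod_cast hk2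
    have hloglog : log (log k) ≤ log (log (log r)) :=
      log_le_log (log_pos hk1) (log_le_log (by linarith) hk_le)
    have hlog_lt : d * log r ≤ d * (k + 1) := by gcongr; exact (Nat.lt_floor_add_one _).le
    unfold threshold at hlt
    nlinarith [mul_le_mul_of_nonneg_left hloglog hc]

theorem max_potential_eventual_lower_bound
    {Ω : Type*} [MeasurableSpace Ω] (P : Measure Ω) [IsProbabilityMeasure P]
    (d : ℕ) (hd : 1 ≤ d) (ξ : (Fin d → ℤ) → Ω → ℝ)
    (hmeas : ∀ z, Measurable (ξ z))
    (hindep : iIndepFun (m := fun _ => (inferInstance : MeasurableSpace ℝ)) ξ P)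
    (hlaw : ∀ z, ∀ x : ℝ, 0 ≤ x → P {ω | x < ξ z ω} = ENNReal.ofReal (Real.exp (-x)))
    (c : ℝ) (hc : 0 < c) :
    ∀ᵐ ω ∂P, ∃ r₀ : ℝ, ∀ r ≥ r₀, ∃ z : Fin d → ℤ, (∑ i, |(z i : ℝ)|) ≤ r ∧
      d * Real.log r - (1 + c) * Real.log (Real.log (Real.log r)) ≤ ξ z ω := by
  filter_upwards [ae_eventually_exists_threshold_lt hmeas hindep hlaw hd hc] with ω hω
  exact eventually_atTop.1 (eventually_exists_of_eventually_threshold_lt (by linarith) hω)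
end

section
/- Let $(\xi(z))_{z\in\mathbb{Z}^d}$ be i.i.d. standard exponential random variables. For $n\in\mathbb{N}$ let $M_n^{(k)}$ denote the $k$-th largest value of $\xi$ on the $\ell^1$-ball $\{|z|\le n\}$. Fix $0<\beta<1$. Then almost surely $\lim_{n\to\infty} M_n^{(\lfloor n^{\beta}\rfloor)}/\log n = d-\beta$. -/
/-!
Write `l ≍ n^d` for the number of sites in the ball and `k = ⌊n^β⌋`. If `M_n > c log n`, at least
`k` sites exceed `c log n`; a union bound over `k`-subsets bounds this by `(e l n^{-c} / k)^k`,
which is at most `2^{-k} ≤ n^{-2}` once `c > d - β`. If `M_n < c log n`, all but `k - 1` sites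
lie below `c log n`; this has probability at most `l^{k-1} exp(-n^{-c} l / 2)`, and for
`c < d - β` the term `n^{-c} l ≳ n^{d - c}` dominates `k log l ≲ n^β log n`, giving again `n^{-2}`.
Borel–Cantelli, applied for every rational `c`, yields the limit.
-/

open MeasureTheory ProbabilityTheory Real Filter

open scoped Classical in
/-- The `ℓ¹`-ball of radius `n` in `ℤ^d`, as a finset. -/
noncomputable def latticeBall (d n : ℕ) : Finset (Fin d → ℤ) :=
  (Finset.Icc (fun _ => -(n : ℤ)) fun _ => (n : ℤ)).filter fun z => (∑ i, (z i).natAbs) ≤ n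

open Finset
open scoped ENNReal

theorem card_latticeBall_le (d n : ℕ) : #(latticeBall d n) ≤ (2 * n + 1) ^ d := by
  refine (card_filter_le _ _).trans ?_
  simp only [Pi.card_Icc, Int.card_Icc, prod_const, card_univ, Fintype.card_fin]
  apply le_of_eq; congr 1; omega

theorem pow_le_card_latticeBall (d n : ℕ) : (n / d + 1) ^ d ≤ #(latticeBall d n) := by
  obtain ⟨q, hqn, hq⟩ : ∃ q, q * d ≤ n ∧ n / d = q := ⟨_, Nat.div_mul_le_self n d, rfl⟩
  rw [hq]
  have hsub : Icc (fun _ => (0 : ℤ)) (fun _ => (q : ℤ)) ⊆ latticeBall d n := by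
    intro z hz
    simp only [mem_Icc, Pi.le_def] at hz
    have hle : ∀ i, (z i).natAbs ≤ q := fun i => by have := hz.1 i; have := hz.2 i; omega
    have hsum : ∑ i, (z i).natAbs ≤ n :=
      calc ∑ i, (z i).natAbs ≤ ∑ _i : Fin d, q := sum_le_sum fun i _ => hle i
        _ = q * d := by simp [mul_comm]
        _ ≤ n := hqn
    simp only [latticeBall, mem_filter, mem_Icc, Pi.le_def]
    refine ⟨⟨fun i => ?_, fun i => ?_⟩, hsum⟩ <;>
      have := single_le_sum (fun j _ => Nat.zero_le _) (mem_univ i) |>.trans hsum <;> omega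
  have hcard : #(Icc (0 : ℤ) q) = q + 1 := by rw [Int.card_Icc]; omega
  simpa [Pi.card_Icc, hcard] using card_le_card hsub

theorem div_pow_le_card_latticeBall (d n : ℕ) : ((n : ℝ) / d) ^ d ≤ #(latticeBall d n) := by
  have h : (n : ℝ) / d ≤ (n / d : ℕ) + 1 := by
    rcases Nat.eq_zero_or_pos d with rfl | hd
    · simp
    · rw [div_le_iff₀ (by exact_mod_cast hd)]
      exact_mod_cast (add_one_mul (n / d) d).symm ▸ (Nat.lt_div_mul_add hd).le
  calc ((n : ℝ) / d) ^ d ≤ ((n / d : ℕ) + 1 : ℝ) ^ d := by gcongr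
    _ ≤ #(latticeBall d n) := by exact_mod_cast pow_le_card_latticeBall d n

theorem card_latticeBall_le_rpow {d n : ℕ} (hn : 1 ≤ n) :
    (#(latticeBall d n) : ℝ) ≤ 3 ^ d * (n : ℝ) ^ (d : ℝ) := by
  have hn' : (1 : ℝ) ≤ n := by exact_mod_cast hn
  calc (#(latticeBall d n) : ℝ) ≤ ((2 * n + 1 : ℕ) : ℝ) ^ d := by
        exact_mod_cast card_latticeBall_le d n
    _ ≤ (3 * n) ^ d := by gcongr; push_cast; linarith
    _ = 3 ^ d * (n : ℝ) ^ (d : ℝ) := by rw [mul_pow, rpow_natCast]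

theorem one_le_card_latticeBall (d n : ℕ) : 1 ≤ #(latticeBall d n) :=
  (Nat.one_le_pow _ _ (Nat.succ_pos _)).trans (pow_le_card_latticeBall d n)

theorem log_card_latticeBall_le {d n : ℕ} (hn : 1 ≤ n) :
    log #(latticeBall d n) ≤ d * log 3 + d * log n := by
  have hn0 : (0 : ℝ) < n := by exact_mod_cast hn
  rw [← log_rpow hn0, ← log_pow, ← log_mul (by positivity) (by positivity)]
  exact log_le_log (by exact_mod_cast one_le_card_latticeBall d n) (card_latticeBall_le_rpow hn)

theorem rpow_sub_div_le_rpow_neg_mul_card_latticeBall {d n : ℕ} (hn : 1 ≤ n) (c : ℝ) :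
    (n : ℝ) ^ ((d : ℝ) - c) / d ^ d ≤ (n : ℝ) ^ (-c) * #(latticeBall d n) := by
  have hn0 : (0 : ℝ) < n := by exact_mod_cast hn
  rw [sub_eq_add_neg, rpow_add hn0, rpow_natCast, mul_comm, mul_div_assoc, ← div_pow]
  exact mul_le_mul_of_nonneg_left (div_pow_le_card_latticeBall d n) (by positivity)

theorem Nat.choose_le_exp_mul_div_pow (n k : ℕ) : (n.choose k : ℝ) ≤ (exp 1 * n / k) ^ k := by
  rcases Nat.eq_zero_or_pos k with rfl | hk
  · simp
  have hk' : (0 : ℝ) < k := by exact_mod_cast hk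
  have hfact : (k : ℝ) ^ k ≤ exp 1 ^ k * k.factorial := by
    rw [← exp_nat_mul, mul_one, ← div_le_iff₀ (by positivity)]
    exact Real.pow_div_factorial_le_exp (x := (k : ℝ)) hk'.le k
  calc (n.choose k : ℝ) ≤ n ^ k / k.factorial := Nat.choose_le_pow_div k n
    _ ≤ (exp 1 * n / k) ^ k := by
      rw [div_pow, mul_pow, div_le_div_iff₀ (by positivity) (by positivity)]
      calc (n : ℝ) ^ k * k ^ k ≤ n ^ k * (exp 1 ^ k * k.factorial) := by gcongr
        _ = exp 1 ^ k * n ^ k * k.factorial := by ring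

theorem half_le_natFloor {x : ℝ} (hx : 1 ≤ x) : x / 2 ≤ ⌊x⌋₊ := by
  rcases le_or_gt x 2 with h | h
  · linarith [show (1 : ℝ) ≤ ⌊x⌋₊ from mod_cast Nat.le_floor (mod_cast hx : ((1 : ℕ) : ℝ) ≤ x)]
  · linarith [Nat.sub_one_lt_floor x]

theorem exp_neg_mul_log {x : ℝ} (hx : 0 < x) (c : ℝ) : exp (-(c * log x)) = x ^ (-c) := by
  rw [rpow_def_of_pos hx]; ring_nf

theorem eventually_mul_log_add_le_rpow (K K' : ℝ) {ε : ℝ} (hε : 0 < ε) :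
    ∀ᶠ n : ℕ in atTop, K * log n + K' ≤ (n : ℝ) ^ ε := by
  have hconst : (fun _ : ℝ => K') =o[atTop] fun x => x ^ ε :=
    Asymptotics.isLittleO_const_left.2 <| Or.inr <|
      tendsto_norm_atTop_atTop.comp (tendsto_rpow_atTop hε)
  have h := ((isLittleO_log_rpow_atTop hε).const_mul_left K).add hconst
  filter_upwards [tendsto_natCast_atTop_atTop.eventually
    (h.eventuallyLE.and (eventually_ge_atTop 0))] with n ⟨hn, hn0⟩
  rw [norm_of_nonneg (rpow_nonneg hn0 ε)] at hn
  exact (le_norm_self _).trans hn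

theorem ae_eventually_notMem_of_eventually_le_ofReal {Ω : Type*} [MeasurableSpace Ω]
    {μ : Measure Ω} {A : ℕ → Set Ω} {c : ℕ → ℝ} (hc0 : ∀ n, 0 ≤ c n) (hc : Summable c)
    (h : ∀ᶠ n in atTop, μ (A n) ≤ ENNReal.ofReal (c n)) :
    ∀ᵐ ω ∂μ, ∀ᶠ n in atTop, ω ∉ A n := by
  obtain ⟨N, hN⟩ := eventually_atTop.1 h
  have hsum : ∑' n, μ (A (n + N)) ≠ ∞ := by
    refine ne_top_of_le_ne_top (ENNReal.ofReal_ne_top (r := ∑' n, c (n + N))) ?_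
    calc ∑' n, μ (A (n + N)) ≤ ∑' n, ENNReal.ofReal (c (n + N)) :=
          ENNReal.tsum_le_tsum fun n => hN _ (Nat.le_add_left N n)
      _ = ENNReal.ofReal (∑' n, c (n + N)) :=
          (ENNReal.ofReal_tsum_of_nonneg (fun n => hc0 _) ((summable_nat_add_iff N).2 hc)).symm
  filter_upwards [ae_eventually_notMem hsum] with ω hω
  obtain ⟨N', hN'⟩ := eventually_atTop.1 hω
  refine eventually_atTop.2 ⟨N' + N, fun n hn => ?_⟩
  simpa [Nat.sub_add_cancel (by omega : N ≤ n)] using hN' (n - N) (by omega)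

section Counting

variable {Ω ι : Type*} [MeasurableSpace Ω] {P : Measure Ω} {ξ : ι → Ω → ℝ}

open scoped Classical in
theorem ProbabilityTheory.iIndepFun.measure_le_card_filter_mem_le (hξ : iIndepFun ξ P)
    {B : Set ℝ} (hB : MeasurableSet B) {r : ℝ≥0∞} (hr : ∀ z, P (ξ z ⁻¹' B) ≤ r)
    (s : Finset ι) (m : ℕ) :
    P {ω | m ≤ #{z ∈ s | ξ z ω ∈ B}} ≤ (#s).choose m * r ^ m := by
  have hcover :
      {ω | m ≤ #{z ∈ s | ξ z ω ∈ B}} ⊆ ⋃ t ∈ s.powersetCard m, ⋂ z ∈ t, ξ z ⁻¹' B := by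
    intro ω hω
    obtain ⟨t, hts, htm⟩ := exists_subset_card_eq hω
    exact Set.mem_biUnion (mem_powersetCard.2 ⟨hts.trans (filter_subset _ _), htm⟩)
      (Set.mem_iInter₂.2 fun z hz => (mem_filter.1 (hts hz)).2)
  have hinter : ∀ t ∈ s.powersetCard m, P (⋂ z ∈ t, ξ z ⁻¹' B) ≤ r ^ m := fun t ht => by
    rw [hξ.meas_biInter fun z _ => ⟨B, hB, rfl⟩, ← (mem_powersetCard.1 ht).2]
    exact prod_le_pow_card _ _ _ fun z _ => hr z
  calc P {ω | m ≤ #{z ∈ s | ξ z ω ∈ B}}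
      ≤ ∑ t ∈ s.powersetCard m, P (⋂ z ∈ t, ξ z ⁻¹' B) :=
        (measure_mono hcover).trans (measure_biUnion_finset_le _ _)
    _ ≤ ∑ _t ∈ s.powersetCard m, r ^ m := sum_le_sum hinter
    _ = (#s).choose m * r ^ m := by rw [sum_const, card_powersetCard, nsmul_eq_mul]

theorem measure_le_card_filter_lt_le (hξ : iIndepFun ξ P)
    (hlaw : ∀ z, ∀ x : ℝ, 0 ≤ x → P {ω | x < ξ z ω} = ENNReal.ofReal (exp (-x)))
    (s : Finset ι) {a : ℝ} (ha : 0 ≤ a) (k : ℕ) :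
    P {ω | k ≤ #{z ∈ s | a < ξ z ω}} ≤ ENNReal.ofReal ((exp 1 * #s * exp (-a) / k) ^ k) := by
  have h := hξ.measure_le_card_filter_mem_le measurableSet_Ioi (fun z => (hlaw z a ha).le) s k
  simp only [Set.mem_Ioi] at h
  refine h.trans ?_
  rw [← ENNReal.ofReal_pow (exp_pos _).le, ← ENNReal.ofReal_natCast,
    ← ENNReal.ofReal_mul (by positivity)]
  refine ENNReal.ofReal_le_ofReal ?_
  calc ((#s).choose k : ℝ) * exp (-a) ^ k ≤ (exp 1 * #s / k) ^ k * exp (-a) ^ k := by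
        gcongr; exact Nat.choose_le_exp_mul_div_pow _ _
    _ = (exp 1 * #s * exp (-a) / k) ^ k := by rw [← mul_pow]; ring

theorem measure_le_card_filter_le_le [IsProbabilityMeasure P] (hξ : iIndepFun ξ P)
    (hmeas : ∀ z, Measurable (ξ z))
    (hlaw : ∀ z, ∀ x : ℝ, 0 ≤ x → P {ω | x < ξ z ω} = ENNReal.ofReal (exp (-x)))
    (s : Finset ι) {a : ℝ} (ha : 0 ≤ a) {m : ℕ} (hm : m ≤ #s) :
    P {ω | m ≤ #{z ∈ s | ξ z ω ≤ a}} ≤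
      ENNReal.ofReal ((#s : ℝ) ^ (#s - m) * exp (-(exp (-a) * m))) := by
  have hle : ∀ z, P (ξ z ⁻¹' Set.Iic a) = ENNReal.ofReal (1 - exp (-a)) := fun z => by
    rw [← Set.compl_Ioi, Set.preimage_compl, prob_compl_eq_one_sub (hmeas z measurableSet_Ioi),
      show P (ξ z ⁻¹' Set.Ioi a) = _ from hlaw z a ha, ← ENNReal.ofReal_one,
      ← ENNReal.ofReal_sub _ (exp_pos _).le]
  have h := hξ.measure_le_card_filter_mem_le measurableSet_Iic (fun z => (hle z).le) s m
  simp only [Set.mem_Iic] at h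
  have hp : 0 ≤ 1 - exp (-a) := by simpa using exp_le_one_iff.2 (neg_nonpos.2 ha)
  refine h.trans ?_
  rw [← ENNReal.ofReal_pow hp, ← ENNReal.ofReal_natCast, ← ENNReal.ofReal_mul (by positivity)]
  refine ENNReal.ofReal_le_ofReal ?_
  calc ((#s).choose m : ℝ) * (1 - exp (-a)) ^ m
      ≤ (#s : ℝ) ^ (#s - m) * exp (-exp (-a)) ^ m := by
        gcongr
        · rw [← Nat.choose_symm hm]; exact_mod_cast Nat.choose_le_pow _ _
        · linarith [add_one_le_exp (-exp (-a))]
    _ = (#s : ℝ) ^ (#s - m) * exp (-(exp (-a) * m)) := by rw [← exp_nat_mul]; ring_nf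

end Counting

section Asymptotics

variable {d : ℕ} {β c : ℝ}

theorem eventually_exp_mul_card_latticeBall_div_le (hβ : 0 < β) (hc : d - β < c) :
    ∀ᶠ n : ℕ in atTop,
      exp 1 * #(latticeBall d n) * exp (-(c * log n)) / ⌊(n : ℝ) ^ β⌋₊ ≤ 1 / 2 := by
  filter_upwards [eventually_ge_atTop 1,
    eventually_mul_log_add_le_rpow 0 (4 * exp 1 * 3 ^ d) (sub_pos.2 hc)] with n hn hδ
  have hX : (1 : ℝ) ≤ n := by exact_mod_cast hn
  have hX0 : (0 : ℝ) < n := by linarith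
  have hk : (n : ℝ) ^ β / 2 ≤ ⌊(n : ℝ) ^ β⌋₊ := half_le_natFloor (one_le_rpow hX hβ.le)
  have hXβ : 0 < (n : ℝ) ^ β := rpow_pos_of_pos hX0 β
  have hsplit :
      (n : ℝ) ^ (d : ℝ) * (n : ℝ) ^ (-c) * (n : ℝ) ^ (c - (d - β)) = (n : ℝ) ^ β := by
    rw [← rpow_add hX0, ← rpow_add hX0]; ring_nf
  rw [zero_mul, zero_add] at hδ
  rw [div_le_iff₀ (by linarith), exp_neg_mul_log hX0]
  have hmain : exp 1 * 3 ^ d * ((n : ℝ) ^ (d : ℝ) * (n : ℝ) ^ (-c)) ≤ (n : ℝ) ^ β / 4 := by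
    rw [← hsplit, le_div_iff₀ (by norm_num)]
    have : 0 ≤ (n : ℝ) ^ (d : ℝ) * (n : ℝ) ^ (-c) := by positivity
    nlinarith
  calc exp 1 * #(latticeBall d n) * (n : ℝ) ^ (-c)
      ≤ exp 1 * (3 ^ d * (n : ℝ) ^ (d : ℝ)) * (n : ℝ) ^ (-c) := by
        gcongr; exact card_latticeBall_le_rpow hn
    _ ≤ (n : ℝ) ^ β / 4 := by linarith
    _ ≤ 1 / 2 * ⌊(n : ℝ) ^ β⌋₊ := by linarith

theorem eventually_half_pow_natFloor_rpow_le (hβ : 0 < β) :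
    ∀ᶠ n : ℕ in atTop, (1 / 2 : ℝ) ^ ⌊(n : ℝ) ^ β⌋₊ ≤ (n : ℝ) ^ (-2 : ℝ) := by
  have hlog2 : 0 < log 2 := log_pos (by norm_num)
  filter_upwards [eventually_ge_atTop 1, eventually_mul_log_add_le_rpow (4 / log 2) 0 hβ]
    with n hn hlog
  have hX0 : (0 : ℝ) < n := by exact_mod_cast hn
  have hk : (n : ℝ) ^ β / 2 ≤ ⌊(n : ℝ) ^ β⌋₊ :=
    half_le_natFloor (one_le_rpow (by exact_mod_cast hn) hβ.le)
  have hlogk : 2 * log n ≤ ⌊(n : ℝ) ^ β⌋₊ * log 2 := by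
    rw [add_zero, div_mul_eq_mul_div, div_le_iff₀ hlog2] at hlog
    nlinarith
  rw [one_div, inv_pow, rpow_neg hX0.le, ← rpow_natCast,
    inv_le_inv₀ (by positivity) (by positivity), rpow_def_of_pos hX0, rpow_def_of_pos (by norm_num)]
  exact exp_le_exp.2 (by linarith)

theorem eventually_two_mul_natFloor_rpow_le_card_latticeBall (hd : 1 ≤ d) (hβ : β < 1) :
    ∀ᶠ n : ℕ in atTop, 2 * ⌊(n : ℝ) ^ β⌋₊ ≤ #(latticeBall d n) := by
  filter_upwards [eventually_ge_atTop d,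
    eventually_mul_log_add_le_rpow 0 (2 * d) (sub_pos.2 hβ)] with n hn hpow
  have hd0 : (0 : ℝ) < d := by exact_mod_cast hd
  have hX0 : (0 : ℝ) < n := by exact_mod_cast (hd.trans hn)
  have hnd : (1 : ℝ) ≤ n / d := (one_le_div hd0).2 (by exact_mod_cast hn)
  have hβ2 : 2 * (n : ℝ) ^ β ≤ n / d := by
    rw [le_div_iff₀ hd0]
    calc 2 * (n : ℝ) ^ β * d = (n : ℝ) ^ β * (2 * d) := by ring
      _ ≤ (n : ℝ) ^ β * (n : ℝ) ^ (1 - β) := by gcongr; linarith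
      _ = n := by rw [← rpow_add hX0]; simp
  have : (2 * ⌊(n : ℝ) ^ β⌋₊ : ℝ) ≤ #(latticeBall d n) :=
    calc (2 * ⌊(n : ℝ) ^ β⌋₊ : ℝ) ≤ 2 * (n : ℝ) ^ β := by
          gcongr; exact Nat.floor_le (by positivity)
      _ ≤ n / d := hβ2
      _ ≤ ((n : ℝ) / d) ^ d := le_self_pow₀ hnd (by omega)
      _ ≤ #(latticeBall d n) := div_pow_le_card_latticeBall d n
  exact_mod_cast this

theorem eventually_card_latticeBall_pow_mul_exp_le (hd : 1 ≤ d) (hβ : 0 ≤ β)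
    (hc : c < d - β) :
    ∀ᶠ n : ℕ in atTop, (#(latticeBall d n) : ℝ) ^ (⌊(n : ℝ) ^ β⌋₊ - 1) *
      exp (-(exp (-(c * log n)) * (#(latticeBall d n) / 2))) ≤ (n : ℝ) ^ (-2 : ℝ) := by
  have hdd : (0 : ℝ) < (d : ℝ) ^ d := pow_pos (by exact_mod_cast hd) d
  filter_upwards [eventually_ge_atTop 1, eventually_mul_log_add_le_rpow (2 * d ^ d * (d + 2))
    (2 * d ^ d * (d * log 3)) (by linarith : 0 < d - β - c)] with n hn hlog_small
  set l : ℝ := (#(latticeBall d n) : ℝ)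
  have hX : (1 : ℝ) ≤ n := by exact_mod_cast hn
  have hX0 : (0 : ℝ) < n := by linarith
  have hlogX : 0 ≤ log n := log_nonneg hX
  have hXβ : 1 ≤ (n : ℝ) ^ β := one_le_rpow hX hβ
  have hl1 : 1 ≤ l := Nat.one_le_cast.2 (one_le_card_latticeBall d n)
  have hl0 : 0 < l := by linarith
  have hlogl := log_card_latticeBall_le (d := d) hn
  have hk : ((⌊(n : ℝ) ^ β⌋₊ - 1 : ℕ) : ℝ) ≤ (n : ℝ) ^ β :=
    (Nat.cast_le.2 (Nat.sub_le _ _)).trans (Nat.floor_le (by positivity))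
  have hmass : (n : ℝ) ^ β * (n : ℝ) ^ (d - β - c) / d ^ d / 2 ≤ exp (-(c * log n)) * (l / 2) := by
    rw [exp_neg_mul_log hX0, ← rpow_add hX0, show β + (d - β - c) = d - c by ring]
    linarith [rpow_sub_div_le_rpow_neg_mul_card_latticeBall (d := d) hn c]
  have hmass_large : (n : ℝ) ^ β * (d * log 3 + (d + 2) * log n) ≤
      (n : ℝ) ^ β * (n : ℝ) ^ (d - β - c) / d ^ d / 2 := by
    rw [mul_div_assoc, mul_div_assoc]; gcongr; rw [div_div, le_div_iff₀ (by positivity)]; linarith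
  have hexponent : ((⌊(n : ℝ) ^ β⌋₊ - 1 : ℕ) : ℝ) * log l - exp (-(c * log n)) * (l / 2) ≤
      -2 * log n := by
    have h1 : ((⌊(n : ℝ) ^ β⌋₊ - 1 : ℕ) : ℝ) * log l ≤ (n : ℝ) ^ β * (d * log 3 + d * log n) :=
      mul_le_mul hk hlogl (log_nonneg hl1) (by positivity)
    nlinarith
  calc l ^ (⌊(n : ℝ) ^ β⌋₊ - 1) * exp (-(exp (-(c * log n)) * (l / 2)))
      = exp (((⌊(n : ℝ) ^ β⌋₊ - 1 : ℕ) : ℝ) * log l - exp (-(c * log n)) * (l / 2)) := by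
        rw [exp_sub, exp_nat_mul, exp_log hl0, exp_neg]; ring
    _ ≤ exp (-2 * log n) := exp_le_exp.2 hexponent
    _ = (n : ℝ) ^ (-2 : ℝ) := by rw [rpow_def_of_pos hX0, mul_comm]

end Asymptotics

section Potential

variable {Ω : Type*} [MeasurableSpace Ω] {P : Measure Ω} {d : ℕ} {ξ : (Fin d → ℤ) → Ω → ℝ}
  {β c : ℝ} {M : ℕ → Ω → ℝ}

theorem ae_eventually_le_mul_log (hξ : iIndepFun ξ P)
    (hlaw : ∀ z, ∀ x : ℝ, 0 ≤ x → P {ω | x < ξ z ω} = ENNReal.ofReal (exp (-x)))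
    (hβ : 0 < β) (hc0 : 0 ≤ c) (hc : d - β < c)
    (hM : ∀ n : ℕ, 1 ≤ n → ∀ ω, ⌊(n : ℝ) ^ β⌋₊ ≤ #{z ∈ latticeBall d n | M n ω ≤ ξ z ω}) :
    ∀ᵐ ω ∂P, ∀ᶠ n : ℕ in atTop, M n ω ≤ c * log n := by
  have hprob : ∀ᶠ n : ℕ in atTop,
      P {ω | c * log n < M n ω} ≤ ENNReal.ofReal ((n : ℝ) ^ (-2 : ℝ)) := by
    filter_upwards [eventually_ge_atTop 1, eventually_exp_mul_card_latticeBall_div_le hβ hc,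
      eventually_half_pow_natFloor_rpow_le hβ] with n hn hbase hhalf
    have hsub : {ω | c * log n < M n ω} ⊆
        {ω | ⌊(n : ℝ) ^ β⌋₊ ≤ #{z ∈ latticeBall d n | c * log n < ξ z ω}} := fun ω hω =>
      (hM n hn ω).trans <| card_le_card <| monotone_filter_right _ fun _ _ h => hω.trans_le h
    calc P {ω | c * log n < M n ω}
        ≤ P {ω | ⌊(n : ℝ) ^ β⌋₊ ≤ #{z ∈ latticeBall d n | c * log n < ξ z ω}} :=
          measure_mono hsub
      _ ≤ ENNReal.ofReal ((exp 1 * #(latticeBall d n) * exp (-(c * log n)) / ⌊(n : ℝ) ^ β⌋₊)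
            ^ ⌊(n : ℝ) ^ β⌋₊) :=
        measure_le_card_filter_lt_le hξ hlaw _ (mul_nonneg hc0 (log_natCast_nonneg n)) _
      _ ≤ ENNReal.ofReal ((n : ℝ) ^ (-2 : ℝ)) := by
        refine ENNReal.ofReal_le_ofReal ((pow_le_pow_left₀ (by positivity) hbase _).trans hhalf)
  filter_upwards [ae_eventually_notMem_of_eventually_le_ofReal (fun n => by positivity)
    (summable_nat_rpow.2 (by norm_num)) hprob] with ω hω
  exact hω.mono fun n hn => not_lt.1 hn

theorem ae_eventually_mul_log_le [IsProbabilityMeasure P] (hξ : iIndepFun ξ P)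
    (hmeas : ∀ z, Measurable (ξ z))
    (hlaw : ∀ z, ∀ x : ℝ, 0 ≤ x → P {ω | x < ξ z ω} = ENNReal.ofReal (exp (-x)))
    (hβ0 : 0 ≤ β) (hβ1 : β < 1) (hc0 : 0 ≤ c) (hc : c < d - β)
    (hM : ∀ n : ℕ, 1 ≤ n → ∀ ω, #{z ∈ latticeBall d n | M n ω < ξ z ω} < ⌊(n : ℝ) ^ β⌋₊) :
    ∀ᵐ ω ∂P, ∀ᶠ n : ℕ in atTop, c * log n ≤ M n ω := by
  have hd : 1 ≤ d := Nat.cast_pos.1 (by linarith : (0 : ℝ) < d)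
  have hprob : ∀ᶠ n : ℕ in atTop,
      P {ω | M n ω < c * log n} ≤ ENNReal.ofReal ((n : ℝ) ^ (-2 : ℝ)) := by
    filter_upwards [eventually_ge_atTop 1,
      eventually_two_mul_natFloor_rpow_le_card_latticeBall hd hβ1,
      eventually_card_latticeBall_pow_mul_exp_le hd hβ0 hc] with n hn hkl hbound
    set a := c * log n
    set l := #(latticeBall d n)
    set k := ⌊(n : ℝ) ^ β⌋₊
    have hsub : {ω | M n ω < a} ⊆ {ω | l - (k - 1) ≤ #{z ∈ latticeBall d n | ξ z ω ≤ a}} := by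
      intro ω hω
      have hlarge : #{z ∈ latticeBall d n | a < ξ z ω} < k := (hM n hn ω).trans_le' <|
        card_le_card <| monotone_filter_right _ fun _ _ h => (show M n ω < a from hω).trans h
      have hsplit := card_filter_add_card_filter_not (s := latticeBall d n) fun z => ξ z ω ≤ a
      simp only [not_le] at hsplit
      show l - (k - 1) ≤ _
      omega
    have hm : (l : ℝ) / 2 ≤ (l - (k - 1) : ℕ) := by
      rw [div_le_iff₀ two_pos]; exact_mod_cast (by omega : l ≤ (l - (k - 1)) * 2)
    calc P {ω | M n ω < a}
        ≤ P {ω | l - (k - 1) ≤ #{z ∈ latticeBall d n | ξ z ω ≤ a}} := measure_mono hsub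
      _ ≤ ENNReal.ofReal
            ((l : ℝ) ^ (l - (l - (k - 1))) * exp (-(exp (-a) * (l - (k - 1) : ℕ)))) :=
        measure_le_card_filter_le_le hξ hmeas hlaw _ (mul_nonneg hc0 (log_natCast_nonneg n))
          (Nat.sub_le _ _)
      _ ≤ ENNReal.ofReal ((n : ℝ) ^ (-2 : ℝ)) := by
        refine ENNReal.ofReal_le_ofReal (le_trans ?_ hbound)
        rw [Nat.sub_sub_self (by omega)]
        gcongr
  filter_upwards [ae_eventually_notMem_of_eventually_le_ofReal (fun n => by positivity)
    (summable_nat_rpow.2 (by norm_num)) hprob] with ω hω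
  exact hω.mono fun n hn => not_lt.1 hn

end Potential

theorem tendsto_div_log_of_rat_bounds {f : ℕ → ℝ} {L : ℝ} (hL : 0 < L)
    (hupper : ∀ q : ℚ, L < q → ∀ᶠ n : ℕ in atTop, f n ≤ q * log n)
    (hlower : ∀ q : ℚ, 0 ≤ q → (q : ℝ) < L → ∀ᶠ n : ℕ in atTop, q * log n ≤ f n) :
    Tendsto (fun n : ℕ => f n / log n) atTop (nhds L) := by
  have hlog : ∀ᶠ n : ℕ in atTop, 0 < log n :=
    (eventually_gt_atTop 1).mono fun n hn => log_pos (by exact_mod_cast hn)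
  refine tendsto_order.2 ⟨fun a ha => ?_, fun b hb => ?_⟩
  · obtain ⟨q, hq, hqL⟩ := exists_rat_btwn (max_lt ha hL)
    filter_upwards [hlower q (by exact_mod_cast (le_max_right a 0).trans hq.le) hqL, hlog]
      with n hn hlogn
    rw [lt_div_iff₀ hlogn]
    exact (mul_lt_mul_of_pos_right ((le_max_left a 0).trans_lt hq) hlogn).trans_le hn
  · obtain ⟨q, hLq, hq⟩ := exists_rat_btwn hb
    filter_upwards [hupper q hLq, hlog] with n hn hlogn
    rw [div_lt_iff₀ hlogn]
    exact hn.trans_lt (mul_lt_mul_of_pos_right hq hlogn)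

open scoped Classical in
/-- Almost surely, the `⌊n^β⌋`-th largest value of an i.i.d. standard exponential potential on
the `ℓ¹`-ball of radius `n` is asymptotic to `(d - β) log n`. -/
theorem order_statistic_asymptotics
    {Ω : Type*} [MeasurableSpace Ω] (P : Measure Ω) [IsProbabilityMeasure P]
    (d : ℕ) (hd : 1 ≤ d) (ξ : (Fin d → ℤ) → Ω → ℝ)
    (hmeas : ∀ z, Measurable (ξ z))
    (hindep : iIndepFun ξ P)
    (hlaw : ∀ z, ∀ x : ℝ, 0 ≤ x → P {ω | x < ξ z ω} = ENNReal.ofReal (Real.exp (-x)))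
    (β : ℝ) (hβ : β ∈ Set.Ioo (0 : ℝ) 1)
    (M : ℕ → Ω → ℝ)
    -- `M n ω` is the `⌊n^β⌋`-th largest value of `ξ(·)(ω)` on the ball of radius `n`:
    -- it is attained, at least `⌊n^β⌋` values are `≥ M n ω`, fewer than `⌊n^β⌋` exceed it.
    (hM : ∀ n : ℕ, 1 ≤ n → ∀ ω,
      (∃ z ∈ latticeBall d n, ξ z ω = M n ω) ∧
      ⌊(n : ℝ) ^ β⌋₊ ≤ ((latticeBall d n).filter fun z => M n ω ≤ ξ z ω).card ∧
      ((latticeBall d n).filter fun z => M n ω < ξ z ω).card < ⌊(n : ℝ) ^ β⌋₊) :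
    ∀ᵐ ω ∂P, Tendsto (fun n : ℕ => M n ω / Real.log n) atTop (nhds (d - β)) := by
  have hdβ : 0 < (d : ℝ) - β := by linarith [hβ.2, (Nat.one_le_cast.2 hd : (1 : ℝ) ≤ d)]
  have hupper : ∀ᵐ ω ∂P, ∀ q : {q : ℚ // (d : ℝ) - β < q},
      ∀ᶠ n : ℕ in atTop, M n ω ≤ q * log n :=
    ae_all_iff.2 fun q => ae_eventually_le_mul_log hindep hlaw hβ.1 (hdβ.trans q.2).le q.2
      fun n hn ω => (hM n hn ω).2.1
  have hlower : ∀ᵐ ω ∂P, ∀ q : {q : ℚ // 0 ≤ (q : ℝ) ∧ (q : ℝ) < d - β},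
      ∀ᶠ n : ℕ in atTop, q * log n ≤ M n ω :=
    ae_all_iff.2 fun q => ae_eventually_mul_log_le hindep hmeas hlaw hβ.1.le hβ.2 q.2.1 q.2.2
      fun n hn ω => (hM n hn ω).2.2
  filter_upwards [hupper, hlower] with ω hω_upper hω_lower
  exact tendsto_div_log_of_rat_bounds hdβ (fun q hq => hω_upper ⟨q, hq⟩)
    fun q hq0 hq => hω_lower ⟨q, by exact_mod_cast hq0, hq⟩
end
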